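/- arXiv:1307.5907 — 2 statements merged into one kernel-verified Lean document; each statement's English description precedes it below -/
import Mathlib

section
/- Let n ≥ 1 and D a self-adjoint n×n complex matrix that is not a scalar multiple of the identity. Then Ω¹_D(Mₙ(C)) = Mₙ(C). -/
/-!
The span `Ω¹_D` of the forms `a * [D, b]` is a left ideal by construction, and it is also a right
ideal because of the Leibniz rule `[D, b] * c = [D, b * c] - b * [D, c]`. It therefore is a
two-sided ideal of the simple ring `Mₙ(ℂ)`, nonzero as soon as `D` is not central, i.e. not scalar.
-/

section OneForms

variable (R : Type*) {A : Type*} [CommRing R] [Ring A] [Algebra R A]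

def oneForms (D : A) : Submodule R A :=
  Submodule.span R {x | ∃ a b : A, x = a * (D * b - b * D)}

variable {R}

lemma commutator_mem_oneForms (D b : A) : D * b - b * D ∈ oneForms R D :=
  Submodule.subset_span ⟨1, b, (one_mul _).symm⟩

lemma mul_mem_oneForms_left {D x : A} (c : A) (hx : x ∈ oneForms R D) :
    c * x ∈ oneForms R D := by
  suffices oneForms R D ≤ (oneForms R D).comap (LinearMap.mulLeft R c) from this hx
  refine Submodule.span_le.mpr ?_
  rintro _ ⟨a, b, rfl⟩
  exact Submodule.subset_span ⟨c * a, b, (mul_assoc _ _ _).symm⟩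

lemma mul_mem_oneForms_right {D x : A} (c : A) (hx : x ∈ oneForms R D) :
    x * c ∈ oneForms R D := by
  suffices oneForms R D ≤ (oneForms R D).comap (LinearMap.mulRight R c) from this hx
  refine Submodule.span_le.mpr ?_
  rintro _ ⟨a, b, rfl⟩
  have leibniz : a * (D * b - b * D) * c
      = a * (D * (b * c) - b * c * D) - a * b * (D * c - c * D) := by
    noncomm_ring
  show a * (D * b - b * D) * c ∈ oneForms R D
  rw [leibniz]
  exact sub_mem (Submodule.subset_span ⟨a, b * c, rfl⟩)
    (Submodule.subset_span ⟨a * b, c, rfl⟩)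

variable (R) in
def oneForms.toTwoSidedIdeal (D : A) : TwoSidedIdeal A :=
  TwoSidedIdeal.mk' (oneForms R D) (zero_mem _) add_mem neg_mem
    (mul_mem_oneForms_left _) (mul_mem_oneForms_right _)

lemma oneForms.mem_toTwoSidedIdeal {D x : A} :
    x ∈ oneForms.toTwoSidedIdeal R D ↔ x ∈ oneForms R D :=
  TwoSidedIdeal.mem_mk' _ _ _ _ _ _ x

lemma oneForms_eq_top_of_not_commute [IsSimpleRing A] {D b : A} (h : ¬Commute D b) :
    oneForms R D = ⊤ := by
  have hne : oneForms.toTwoSidedIdeal R D ≠ ⊥ := fun hbot => h <| sub_eq_zero.mp <|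
    (TwoSidedIdeal.mem_bot A).mp <|
      hbot ▸ oneForms.mem_toTwoSidedIdeal.mpr (commutator_mem_oneForms D b)
  have htop := (eq_bot_or_eq_top (oneForms.toTwoSidedIdeal R D)).resolve_left hne
  exact eq_top_iff.mpr fun x _ =>
    oneForms.mem_toTwoSidedIdeal.mp (htop ▸ TwoSidedIdeal.mem_top A)

end OneForms

lemma Matrix.exists_not_commute_of_ne_smul_one {n R : Type*} [Fintype n] [DecidableEq n]
    [CommRing R] {D : Matrix n n R} (hD : ∀ c : R, D ≠ c • 1) : ∃ b, ¬Commute D b := by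
  by_contra! hcomm
  obtain ⟨c, hc⟩ := Matrix.mem_range_scalar_of_commute_single fun i j _ =>
    (hcomm (Matrix.single i j 1)).symm
  exact hD c (by rw [← hc, Matrix.scalar_apply, Matrix.smul_one_eq_diagonal])

theorem stmt_3_general (n : ℕ) (D : Matrix (Fin n) (Fin n) ℂ)
    (hnontrivial : ∀ c : ℂ, D ≠ c • (1 : Matrix (Fin n) (Fin n) ℂ)) :
    Submodule.span ℂ
      {x : Matrix (Fin n) (Fin n) ℂ | ∃ a b : Matrix (Fin n) (Fin n) ℂ,
        x = a * (D * b - b * D)} = ⊤ := by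
  obtain ⟨b, hb⟩ := Matrix.exists_not_commute_of_ne_smul_one hnontrivial
  -- `IsSimpleRing` for matrices needs a nonempty index type
  have : Nonempty (Fin n) := by
    by_contra hempty
    have : IsEmpty (Fin n) := not_nonempty_iff.mp hempty
    exact hb (Subsingleton.elim _ _)
  exact oneForms_eq_top_of_not_commute hb

/-- If D is a self-adjoint n×n complex matrix that is not a scalar
multiple of the identity, then Ω¹_D(Mₙ(ℂ)) = Mₙ(ℂ). -/
theorem stmt_3 (n : ℕ) (hn : 1 ≤ n) (D : Matrix (Fin n) (Fin n) ℂ)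
    (hD : D.IsHermitian)
    (hnontrivial : ∀ c : ℂ, D ≠ c • (1 : Matrix (Fin n) (Fin n) ℂ)) :
    Submodule.span ℂ
      {x : Matrix (Fin n) (Fin n) ℂ | ∃ a b : Matrix (Fin n) (Fin n) ℂ,
        x = a * (D * b - b * D)} = ⊤ :=
  stmt_3_general n D hnontrivial
end

section
/- Let A ⊆ B(H) and D self-adjoint on a finite-dimensional H. An inner fluctuation A = D' − D ∈ Ω¹_D(A) (a morphism D → D') is an isomorphism in the category of inner fluctuations if and only if Ω¹_{D'}(A) = Ω¹_D(A); in that case the inverse morphism is −A. -/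
/-! Ω¹_D(𝒜) is an 𝒜-bimodule, and `[D + X, b] = [D, b] + [X, b]`; hence `X ∈ Ω¹_D(𝒜)` gives
`Ω¹_{D+X}(𝒜) ⊆ Ω¹_D(𝒜)`. Applied to `D' = D + A` and, when `-A ∈ Ω¹_{D'}(𝒜)`, to `D = D' + (-A)`,
this gives both inclusions; conversely, if the two spaces agree then `-A ∈ Ω¹_D(𝒜) = Ω¹_{D'}(𝒜)`. -/

namespace Subalgebra

variable {K R : Type*} [CommRing K] [Ring R] [Algebra K R]

def oneForms (𝒜 : Subalgebra K R) (D : R) : Submodule K R :=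
  Submodule.span K {x | ∃ a ∈ 𝒜, ∃ b ∈ 𝒜, x = a * (D * b - b * D)}

variable {𝒜 : Subalgebra K R} {D X a b : R}

theorem mul_mem_oneForms (ha : a ∈ 𝒜) (hX : X ∈ 𝒜.oneForms D) : a * X ∈ 𝒜.oneForms D := by
  have : 𝒜.oneForms D ≤ (𝒜.oneForms D).comap (LinearMap.mulLeft K a) := by
    refine Submodule.span_le.mpr ?_
    rintro _ ⟨c, hc, d, hd, rfl⟩
    exact Submodule.subset_span ⟨a * c, mul_mem ha hc, d, hd, by simp [mul_assoc]⟩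
  exact this hX

theorem mem_oneForms_mul (hb : b ∈ 𝒜) (hX : X ∈ 𝒜.oneForms D) : X * b ∈ 𝒜.oneForms D := by
  have : 𝒜.oneForms D ≤ (𝒜.oneForms D).comap (LinearMap.mulRight K b) := by
    refine Submodule.span_le.mpr ?_
    rintro _ ⟨c, hc, d, hd, rfl⟩
    -- Leibniz rule: `[D, d] b = [D, d b] - d [D, b]`.
    have leibniz : c * (D * d - d * D) * b
        = c * (D * (d * b) - d * b * D) - c * d * (D * b - b * D) := by noncomm_ring
    simp only [SetLike.mem_coe, Submodule.mem_comap, LinearMap.mulRight_apply, leibniz]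
    exact sub_mem (Submodule.subset_span ⟨c, hc, d * b, mul_mem hd hb, rfl⟩)
      (Submodule.subset_span ⟨c * d, mul_mem hc hd, b, hb, rfl⟩)
  exact this hX

theorem oneForms_add_le (hX : X ∈ 𝒜.oneForms D) : 𝒜.oneForms (D + X) ≤ 𝒜.oneForms D := by
  refine Submodule.span_le.mpr ?_
  rintro _ ⟨a, ha, b, hb, rfl⟩
  have split : a * ((D + X) * b - b * (D + X)) = a * (D * b - b * D) + (a * X * b - a * b * X) := by
    noncomm_ring
  rw [SetLike.mem_coe, split]
  exact add_mem (Submodule.subset_span ⟨a, ha, b, hb, rfl⟩)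
    (sub_mem (mem_oneForms_mul hb (mul_mem_oneForms ha hX))
      (mul_mem_oneForms (mul_mem ha hb) hX))

end Subalgebra

theorem stmt_5_general {H : Type*} [NormedAddCommGroup H] [InnerProductSpace ℂ H]
    (𝒜 : Subalgebra ℂ (H →L[ℂ] H))
    (D D' A : H →L[ℂ] H)
    (hAmem : A ∈ Submodule.span ℂ
      {x : H →L[ℂ] H | ∃ a ∈ 𝒜, ∃ b ∈ 𝒜, x = a * (D * b - b * D)})
    (hsum : D' = D + A) :
    (-A ∈ Submodule.span ℂ
      {x : H →L[ℂ] H | ∃ a ∈ 𝒜, ∃ b ∈ 𝒜, x = a * (D' * b - b * D')})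
    ↔ Submodule.span ℂ
        {x : H →L[ℂ] H | ∃ a ∈ 𝒜, ∃ b ∈ 𝒜, x = a * (D' * b - b * D')}
      = Submodule.span ℂ
        {x : H →L[ℂ] H | ∃ a ∈ 𝒜, ∃ b ∈ 𝒜, x = a * (D * b - b * D)} := by
  change A ∈ 𝒜.oneForms D at hAmem
  change -A ∈ 𝒜.oneForms D' ↔ 𝒜.oneForms D' = 𝒜.oneForms D
  have hD : D = D' + -A := by rw [hsum, add_neg_cancel_right]
  constructor
  · intro hneg
    refine le_antisymm ?_ ?_
    · simpa only [← hsum] using Subalgebra.oneForms_add_le hAmem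
    · simpa only [← hD] using Subalgebra.oneForms_add_le hneg
  · intro heq
    exact heq ▸ neg_mem hAmem

/-- An inner fluctuation A = D' − D ∈ Ω¹_D(𝒜) (a morphism D → D')
is an isomorphism, i.e. the candidate inverse −A = D − D' is a morphism D' → D
(belongs to Ω¹_{D'}(𝒜)), if and only if Ω¹_{D'}(𝒜) = Ω¹_D(𝒜). -/
theorem stmt_5 {H : Type*} [NormedAddCommGroup H] [InnerProductSpace ℂ H]
    [FiniteDimensional ℂ H]
    (𝒜 : Subalgebra ℂ (H →L[ℂ] H))
    (D D' A : H →L[ℂ] H)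
    (hD : IsSelfAdjoint D) (hD' : IsSelfAdjoint D') (hA : IsSelfAdjoint A)
    (hAmem : A ∈ Submodule.span ℂ
      {x : H →L[ℂ] H | ∃ a ∈ 𝒜, ∃ b ∈ 𝒜, x = a * (D * b - b * D)})
    (hsum : D' = D + A) :
    (-A ∈ Submodule.span ℂ
      {x : H →L[ℂ] H | ∃ a ∈ 𝒜, ∃ b ∈ 𝒜, x = a * (D' * b - b * D')})
    ↔ Submodule.span ℂ
        {x : H →L[ℂ] H | ∃ a ∈ 𝒜, ∃ b ∈ 𝒜, x = a * (D' * b - b * D')}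
      = Submodule.span ℂ
        {x : H →L[ℂ] H | ∃ a ∈ 𝒜, ∃ b ∈ 𝒜, x = a * (D * b - b * D)} :=
  stmt_5_general 𝒜 D D' A hAmem hsum
end
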